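/- Let A be an n×n ASM with p = σ₋(A) negative entries. Then there is a sequence of n×n ASMs A^(p) = A, A^(p−1), …, A^(0) such that A^(0) is a permutation matrix, σ₋(A^(s)) = s for all s, and h(A^(p)) ⪯* h(A^(p−1)) ⪯* … ⪯* h(A^(0)), where h(B) = Bᵀz_n with z_n = (n, n−1, …, 1), and x ⪯* y means all leading partial sums of x are at most those of y with equal total sums. -/

import Mathlib

open Finset

/-- A line (vector) of integers is "alternating" in the ASM sense:
all prefix sums are 0 or 1, and the total sum is 1. This is equivalent to the
nonzero entries being ±1, alternating in sign, beginning and ending with +1. -/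
def AltLine {n : ℕ} (v : Fin n → ℤ) : Prop :=
  (∀ t : Fin n, (∑ s ∈ Finset.univ.filter (fun s => s ≤ t), v s) = 0 ∨
      (∑ s ∈ Finset.univ.filter (fun s => s ≤ t), v s) = 1) ∧
  (∑ s, v s) = 1

/-- Alternating sign matrix. -/
def IsAsm {n : ℕ} (A : Matrix (Fin n) (Fin n) ℤ) : Prop :=
  (∀ i, AltLine (fun j => A i j)) ∧ (∀ j, AltLine (fun i => A i j))

/-- Alternating sign hypermatrix: every line in each of the three directions alternates. -/
def IsAshm {n : ℕ} (A : Fin n → Fin n → Fin n → ℤ) : Prop :=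
  (∀ j k, AltLine (fun i => A i j k)) ∧
  (∀ i k, AltLine (fun j => A i j k)) ∧
  (∀ i j, AltLine (fun k => A i j k))

/-- The ASHM-Latin square `L(A) = 1·A₁ + 2·A₂ + ⋯ + n·Aₙ` (planes indexed from 1). -/
def Lmat {n : ℕ} (A : Fin n → Fin n → Fin n → ℤ) (i j : Fin n) : ℤ :=
  ∑ k : Fin n, ((k.1 : ℤ) + 1) * A i j k

/-- Leading-partial-sum order `x ⪯* y`. -/
def PrecStar {n : ℕ} (x y : Fin n → ℤ) : Prop :=
  (∀ p : ℕ, (∑ j ∈ Finset.univ.filter (fun j : Fin n => j.1 < p), x j)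
      ≤ ∑ j ∈ Finset.univ.filter (fun j : Fin n => j.1 < p), y j) ∧
  (∑ j : Fin n, x j) = ∑ j : Fin n, y j

/-- Weighted horizontal projection `h(B) = Bᵀ zₙ` where `zₙ = (n, n-1, …, 1)`. -/
def hproj {n : ℕ} (B : Matrix (Fin n) (Fin n) ℤ) (j : Fin n) : ℤ :=
  ∑ i : Fin n, ((n - i.1 : ℕ) : ℤ) * B i j

/-!
Choose a `-1` entry `a_{kl}` with `k + l` minimal. No `-1` lies strictly above the antidiagonal
through it, so column `l` has a `1` above row `k` (at row `i`), row `k` has a `1` left of column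
`l` (at column `j`), row `i` vanishes left of `l` and column `j` vanishes above `k`. Adding `1` at
`(i, j), (k, l)` and `-1` at `(i, l), (k, j)` shifts the prefix sums of these four lines by `±1`
only strictly between the two changed entries, and always towards the admissible value, so the
result is again an ASM, with one `-1` fewer. It changes `h` by `(k - i) (e_j - e_l)` with
`i < k` and `j < l`, which can only raise leading partial sums. Iterating ends at an ASM without
`-1` entries, i.e. a permutation matrix.
-/

section

variable {n : ℕ}

def prefixSum (v : Fin n → ℤ) (p : ℕ) : ℤ :=
  ∑ j ∈ univ.filter (fun j : Fin n => j.1 < p), v j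

theorem prefixSum_zero (v : Fin n → ℤ) : prefixSum v 0 = 0 := by
  simp [prefixSum]

theorem prefixSum_succ (v : Fin n → ℤ) (t : Fin n) :
    prefixSum v (t.1 + 1) = prefixSum v t.1 + v t := by
  have h : univ.filter (fun j : Fin n => j.1 < t.1 + 1) =
      insert t (univ.filter (fun j : Fin n => j.1 < t.1)) := by
    ext s; simp [Fin.ext_iff]; omega
  rw [prefixSum, h, sum_insert (by simp), add_comm]; rfl

theorem prefixSum_succ_eq_sum_le (v : Fin n → ℤ) (t : Fin n) :
    prefixSum v (t.1 + 1) = ∑ s ∈ univ.filter (fun s : Fin n => s ≤ t), v s := by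
  rw [prefixSum]; congr 1; ext s
  simp only [mem_filter, mem_univ, true_and, Fin.le_def]; omega

theorem prefixSum_of_le (v : Fin n → ℤ) {p : ℕ} (hp : n ≤ p) : prefixSum v p = ∑ s, v s := by
  unfold prefixSum; congr 1; ext s; simp; omega

theorem prefixSum_add (v w : Fin n → ℤ) (p : ℕ) :
    prefixSum (v + w) p = prefixSum v p + prefixSum w p :=
  sum_add_distrib

theorem prefixSum_sub (v w : Fin n → ℤ) (p : ℕ) :
    prefixSum (v - w) p = prefixSum v p - prefixSum w p :=
  sum_sub_distrib ..

theorem prefixSum_smul (c : ℤ) (v : Fin n → ℤ) (p : ℕ) :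
    prefixSum (c • v) p = c * prefixSum v p := by
  simp [prefixSum, mul_sum]

theorem prefixSum_single (t : Fin n) (c : ℤ) (p : ℕ) :
    prefixSum (Pi.single t c) p = if t.1 < p then c else 0 := by
  simp [prefixSum, Pi.single_apply]

theorem prefixSum_mono {v : Fin n → ℤ} {p q : ℕ} (hv : ∀ s : Fin n, s.1 < q → 0 ≤ v s)
    (hpq : p ≤ q) : prefixSum v p ≤ prefixSum v q :=
  sum_le_sum_of_subset_of_nonneg
    (fun s hs => by simp only [mem_filter, mem_univ, true_and] at hs ⊢; omega)
    (fun s hs _ => hv s (by simpa using hs))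

theorem altLine_iff {v : Fin n → ℤ} :
    AltLine v ↔ (∀ p, prefixSum v p = 0 ∨ prefixSum v p = 1) ∧ prefixSum v n = 1 := by
  rw [AltLine, prefixSum_of_le v le_rfl]
  refine and_congr_left fun htot => ⟨fun h p => ?_, fun h t => ?_⟩
  · rcases p with _ | p
    · simp [prefixSum_zero]
    rcases lt_or_ge p n with hp | hp
    · simpa [prefixSum_succ_eq_sum_le v ⟨p, hp⟩] using h ⟨p, hp⟩
    · simp [prefixSum_of_le v (by omega : n ≤ p + 1), htot]
  · simpa [prefixSum_succ_eq_sum_le] using h (t.1 + 1)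

namespace AltLine

variable {v : Fin n → ℤ}

theorem prefixSum_mem (h : AltLine v) (p : ℕ) : prefixSum v p = 0 ∨ prefixSum v p = 1 :=
  (altLine_iff.mp h).1 p

theorem neg_one_le (h : AltLine v) (t : Fin n) : -1 ≤ v t := by
  have := prefixSum_succ v t
  rcases h.prefixSum_mem (t.1 + 1) with h1 | h1 <;> rcases h.prefixSum_mem t.1 with h2 | h2 <;> omega

theorem le_one (h : AltLine v) (t : Fin n) : v t ≤ 1 := by
  have := prefixSum_succ v t
  rcases h.prefixSum_mem (t.1 + 1) with h1 | h1 <;> rcases h.prefixSum_mem t.1 with h2 | h2 <;> omega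

theorem prefixSum_eq_one_of_eq_neg_one (h : AltLine v) {t : Fin n} (ht : v t = -1) :
    prefixSum v t = 1 := by
  have := prefixSum_succ v t
  rcases h.prefixSum_mem (t.1 + 1) with h1 | h1 <;> rcases h.prefixSum_mem t.1 with h2 | h2 <;> omega

theorem prefixSum_eq_zero_of_eq_one (h : AltLine v) {t : Fin n} (ht : v t = 1) :
    prefixSum v t = 0 := by
  have := prefixSum_succ v t
  rcases h.prefixSum_mem (t.1 + 1) with h1 | h1 <;> rcases h.prefixSum_mem t.1 with h2 | h2 <;> omega

theorem exists_eq_one_of_prefixSum_eq_one (h : AltLine v) {m : ℕ} (hm : prefixSum v m = 1) :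
    ∃ s : Fin n, s.1 < m ∧ v s = 1 := by
  have hpos : (0 : ℤ) < prefixSum v m := by omega
  obtain ⟨s, hs, hvs⟩ := exists_lt_of_sum_lt (s := univ.filter (fun j : Fin n => j.1 < m))
    (f := 0) (g := v) (by simpa [prefixSum] using hpos)
  have := h.le_one s
  simp only [mem_filter, mem_univ, true_and, Pi.zero_apply] at hs hvs
  exact ⟨s, hs, by omega⟩

theorem nonneg_of_ne_neg_one (h : AltLine v) {s : Fin n} (hs : v s ≠ -1) : 0 ≤ v s := by
  have := h.neg_one_le s; omega

theorem prefixSum_eq_zero_of_le (h : AltLine v) {t : Fin n} (ht : v t = 1)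
    (hne : ∀ s : Fin n, s.1 < t.1 → v s ≠ -1) {p : ℕ} (hp : p ≤ t.1) : prefixSum v p = 0 := by
  have := prefixSum_mono (v := v) (fun s hs => h.nonneg_of_ne_neg_one (hne s hs)) hp
  have := h.prefixSum_eq_zero_of_eq_one ht
  rcases h.prefixSum_mem p with h1 | h1 <;> omega

theorem prefixSum_eq_one_of_lt (h : AltLine v) {t : Fin n} (ht : v t = 1) {m : ℕ}
    (hne : ∀ s : Fin n, s.1 < m → v s ≠ -1) {p : ℕ} (htp : t.1 < p) (hpm : p ≤ m) :
    prefixSum v p = 1 := by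
  have := prefixSum_mono (v := v) (p := t.1 + 1)
    (fun s hs => h.nonneg_of_ne_neg_one (hne s (by omega))) htp
  have := prefixSum_succ v t
  have := h.prefixSum_eq_zero_of_eq_one ht
  rcases h.prefixSum_mem p with h1 | h1 <;> omega

theorem add_single_sub_single (h : AltLine v) {u₁ u₂ : Fin n} (hu : u₁ < u₂) {c : ℤ}
    (hc : ∀ p : ℕ, u₁.1 < p → p ≤ u₂.1 → prefixSum v p + c = 0 ∨ prefixSum v p + c = 1) :
    AltLine (v + (Pi.single u₁ c - Pi.single u₂ c)) := by
  have hu' : u₁.1 < u₂.1 := hu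
  refine altLine_iff.mpr ⟨fun p => ?_, ?_⟩
  · simp only [prefixSum_add, prefixSum_sub, prefixSum_single]
    by_cases h₁ : u₁.1 < p
    · by_cases h₂ : u₂.1 < p
      · simpa [h₁, h₂] using h.prefixSum_mem p
      · simpa [h₁, h₂] using hc p h₁ (by omega)
    · simpa [h₁, show ¬ u₂.1 < p by omega] using h.prefixSum_mem p
  · simp [prefixSum_add, prefixSum_sub, prefixSum_single, (altLine_iff.mp h).2]

theorem exists_eq_single_of_ne_neg_one (h : AltLine v) (hne : ∀ s, v s ≠ -1) :
    ∃ t, v = Pi.single t 1 := by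
  obtain ⟨t, -, ht⟩ := h.exists_eq_one_of_prefixSum_eq_one (altLine_iff.mp h).2
  have hrest : ∑ s ∈ univ.erase t, v s = 0 := by
    have := add_sum_erase univ v (mem_univ t)
    have := (altLine_iff.mp h).2
    rw [prefixSum_of_le v le_rfl] at this
    omega
  refine ⟨t, funext fun s => ?_⟩
  rcases eq_or_ne s t with rfl | hst
  · simp [ht]
  · rw [Pi.single_eq_of_ne hst]
    exact (sum_eq_zero_iff_of_nonneg fun s _ => h.nonneg_of_ne_neg_one (hne s)).mp hrest s
      (mem_erase.mpr ⟨hst, mem_univ s⟩)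

end AltLine

theorem precStar_add_smul_single_sub_single (x : Fin n → ℤ) {j l : Fin n} (hjl : j < l)
    {c : ℤ} (hc : 0 ≤ c) : PrecStar x (x + c • (Pi.single j 1 - Pi.single l 1)) := by
  have hjl' : j.1 < l.1 := hjl
  refine ⟨fun p => ?_, ?_⟩
  · change prefixSum x p ≤ prefixSum (x + _) p
    simp only [prefixSum_add, prefixSum_smul, prefixSum_sub, prefixSum_single]
    split_ifs <;> omega
  · simp [sum_add_distrib, ← mul_sum, sum_sub_distrib]

open Matrix

def rectMove (A : Matrix (Fin n) (Fin n) ℤ) (i k j l : Fin n) : Matrix (Fin n) (Fin n) ℤ :=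
  A + vecMulVec (Pi.single i 1 - Pi.single k 1) (Pi.single j 1 - Pi.single l 1)

theorem transpose_rectMove (A : Matrix (Fin n) (Fin n) ℤ) (i k j l : Fin n) :
    (rectMove A i k j l)ᵀ = rectMove Aᵀ j l i k := by
  rw [rectMove, rectMove, transpose_add, transpose_vecMulVec]

theorem altLine_rectMove_row {A : Matrix (Fin n) (Fin n) ℤ} (hA : ∀ a, AltLine (A a))
    {i k j l : Fin n} (hik : i ≠ k) (hjl : j < l)
    (hi : ∀ p : ℕ, j.1 < p → p ≤ l.1 → prefixSum (A i) p = 0)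
    (hk : ∀ p : ℕ, j.1 < p → p ≤ l.1 → prefixSum (A k) p = 1) (a : Fin n) :
    AltLine (rectMove A i k j l a) := by
  set c : ℤ := (Pi.single i 1 - Pi.single k 1 : Fin n → ℤ) a with hc
  have hrow : rectMove A i k j l a = A a + (Pi.single j c - Pi.single l c) := by
    funext b
    simp only [hc, rectMove, Matrix.add_apply, vecMulVec_apply, Pi.add_apply, Pi.sub_apply,
      Pi.single_apply]
    split_ifs <;> ring
  rw [hrow]
  refine (hA a).add_single_sub_single hjl fun p hjp hpl => ?_
  by_cases hai : a = i
  · subst hai; simp [hc, hik, hi p hjp hpl]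
  by_cases hak : a = k
  · subst hak; simp [hc, Ne.symm hik, hk p hjp hpl]
  · simpa [hc, hai, hak] using (hA a).prefixSum_mem p

theorem isAsm_rectMove {A : Matrix (Fin n) (Fin n) ℤ} (hA : IsAsm A) {i k j l : Fin n}
    (hik : i < k) (hjl : j < l)
    (hi : ∀ p : ℕ, j.1 < p → p ≤ l.1 → prefixSum (A i) p = 0)
    (hk : ∀ p : ℕ, j.1 < p → p ≤ l.1 → prefixSum (A k) p = 1)
    (hj : ∀ p : ℕ, i.1 < p → p ≤ k.1 → prefixSum (Aᵀ j) p = 0)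
    (hl : ∀ p : ℕ, i.1 < p → p ≤ k.1 → prefixSum (Aᵀ l) p = 1) :
    IsAsm (rectMove A i k j l) := by
  refine ⟨altLine_rectMove_row hA.1 hik.ne hjl hi hk, fun b => ?_⟩
  have := altLine_rectMove_row (A := Aᵀ) hA.2 hjl.ne hik hj hl b
  rwa [← transpose_rectMove] at this

def negCount (A : Matrix (Fin n) (Fin n) ℤ) : ℕ :=
  #{q : Fin n × Fin n | A q.1 q.2 = -1}

theorem negCount_rectMove_add_one {A : Matrix (Fin n) (Fin n) ℤ} {i k j l : Fin n}
    (hik : i ≠ k) (hjl : j ≠ l) (hij : 0 ≤ A i j) (hil : A i l = 1) (hkj : A k j = 1)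
    (hkl : A k l = -1) :
    negCount (rectMove A i k j l) + 1 = negCount A := by
  have hset : univ.filter (fun q : Fin n × Fin n => rectMove A i k j l q.1 q.2 = -1) =
      (univ.filter (fun q : Fin n × Fin n => A q.1 q.2 = -1)).erase (k, l) := by
    ext ⟨a, b⟩
    simp only [rectMove, mem_filter, mem_univ, true_and, mem_erase, ne_eq, Prod.mk.injEq,
      Matrix.add_apply, vecMulVec_apply, Pi.sub_apply, Pi.single_apply]
    by_cases hai : a = i <;> by_cases hak : a = k <;> by_cases hbj : b = j <;>
      by_cases hbl : b = l <;> subst_vars <;> simp_all; omega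
  rw [negCount, negCount, hset, card_erase_add_one (by simpa using hkl)]

theorem hproj_rectMove (A : Matrix (Fin n) (Fin n) ℤ) (i k j l : Fin n) :
    hproj (rectMove A i k j l) = hproj A + ((k : ℤ) - i) • (Pi.single j 1 - Pi.single l 1) := by
  funext m
  simp only [rectMove, hproj, Matrix.add_apply, vecMulVec_apply, mul_add, sum_add_distrib,
    Pi.add_apply, ← mul_assoc, ← sum_mul, Pi.smul_apply, smul_eq_mul]
  congr 2
  simp [Pi.single_apply, mul_sub, sum_sub_distrib]

theorem IsAsm.exists_perm_of_negCount_eq_zero {A : Matrix (Fin n) (Fin n) ℤ} (hA : IsAsm A)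
    (h0 : negCount A = 0) :
    ∃ σ : Equiv.Perm (Fin n), ∀ i j, A i j = if σ i = j then 1 else 0 := by
  have hne : ∀ a b, A a b ≠ -1 := by
    simpa [negCount, filter_eq_empty_iff] using h0
  choose σ hσ using fun a => (hA.1 a).exists_eq_single_of_ne_neg_one (hne a)
  choose τ hτ using fun b => (hA.2 b).exists_eq_single_of_ne_neg_one (hne · b)
  have hστ : ∀ a b, σ a = b ↔ τ b = a := by
    intro a b
    have h1 := congrFun (hσ a) b
    have h2 := congrFun (hτ b) a
    simp only [Pi.single_apply] at h1 h2
    split_ifs at h1 h2 <;> grind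
  refine ⟨⟨σ, τ, fun a => (hστ a _).mp rfl, fun b => (hστ _ b).mpr rfl⟩, fun a b => ?_⟩
  simp [congrFun (hσ a) b, Pi.single_apply, eq_comm]

theorem IsAsm.exists_reduce {A : Matrix (Fin n) (Fin n) ℤ} (hA : IsAsm A)
    (hpos : 0 < negCount A) :
    ∃ A', IsAsm A' ∧ negCount A' + 1 = negCount A ∧ PrecStar (hproj A) (hproj A') := by
  obtain ⟨⟨k, l⟩, hkl, hmin⟩ := exists_min_image _ (fun q : Fin n × Fin n => q.1.1 + q.2.1)
    (card_pos.mp hpos)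
  simp only [mem_filter, mem_univ, true_and, Prod.forall] at hkl hmin
  have hne : ∀ a b : Fin n, a.1 + b.1 < k.1 + l.1 → A a b ≠ -1 :=
    fun a b hab h => (hmin a b h).not_gt hab
  obtain ⟨i, hik, hil⟩ := (hA.2 l).exists_eq_one_of_prefixSum_eq_one
    ((hA.2 l).prefixSum_eq_one_of_eq_neg_one hkl)
  obtain ⟨j, hjl, hkj⟩ := (hA.1 k).exists_eq_one_of_prefixSum_eq_one
    ((hA.1 k).prefixSum_eq_one_of_eq_neg_one hkl)
  have hij : 0 ≤ A i j := (hA.1 i).nonneg_of_ne_neg_one (hne i j (by omega))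
  refine ⟨rectMove A i k j l, isAsm_rectMove hA hik hjl ?_ ?_ ?_ ?_,
    negCount_rectMove_add_one (Fin.ne_of_lt hik) (Fin.ne_of_lt hjl) hij hil hkj hkl, ?_⟩
  · exact fun p _ hp => (hA.1 i).prefixSum_eq_zero_of_le hil (fun s hs => hne i s (by omega)) hp
  · exact fun p hjp hpl =>
      (hA.1 k).prefixSum_eq_one_of_lt hkj (fun s hs => hne k s (by omega)) hjp hpl
  · exact fun p _ hp => (hA.2 j).prefixSum_eq_zero_of_le hkj (fun s hs => hne s j (by omega)) hp
  · exact fun p hip hpk =>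
      (hA.2 l).prefixSum_eq_one_of_lt hil (fun s hs => hne s l (by omega)) hip hpk
  · rw [hproj_rectMove]
    exact precStar_add_smul_single_sub_single _ hjl (by omega)

end

theorem stmt12 {n : ℕ} (A : Matrix (Fin n) (Fin n) ℤ) (hA : IsAsm A) (p : ℕ)
    (hp : p = (Finset.univ.filter (fun q : Fin n × Fin n => A q.1 q.2 = -1)).card) :
    ∃ f : ℕ → Matrix (Fin n) (Fin n) ℤ,
      f p = A ∧
      (∀ s ≤ p, IsAsm (f s) ∧
        (Finset.univ.filter (fun q : Fin n × Fin n => f s q.1 q.2 = -1)).card = s) ∧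
      (∃ σ : Equiv.Perm (Fin n), ∀ i j : Fin n,
          f 0 i j = if σ i = j then (1 : ℤ) else 0) ∧
      (∀ s, s < p → PrecStar (hproj (f (s + 1))) (hproj (f s))) := by
  induction p generalizing A with
  | zero =>
    obtain ⟨σ, hσ⟩ := hA.exists_perm_of_negCount_eq_zero hp.symm
    refine ⟨fun _ => A, rfl, fun s hs => ?_, ⟨σ, hσ⟩, fun s hs => absurd hs (Nat.not_lt_zero s)⟩
    obtain rfl : s = 0 := Nat.le_zero.mp hs
    exact ⟨hA, hp.symm⟩
  | succ p ih =>
    obtain ⟨A', hA', hcount, hprec⟩ := hA.exists_reduce (by unfold negCount; omega)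
    obtain ⟨f, hfp, hf, hperm, hchain⟩ := ih A' hA' (by unfold negCount at hcount; omega)
    refine ⟨Function.update f (p + 1) A, by simp, fun s hs => ?_, ?_, fun s hs => ?_⟩
    · rcases hs.lt_or_eq with hs | rfl
      · simpa [Function.update_of_ne hs.ne] using hf s (by omega)
      · simpa using ⟨hA, hp.symm⟩
    · simpa using hperm
    · rcases (Nat.lt_succ_iff.mp hs).lt_or_eq with hs | rfl
      · simpa [Function.update_of_ne (by omega : s ≠ p + 1),
          Function.update_of_ne (by omega : s + 1 ≠ p + 1)]
          using hchain s hs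
      · simpa [hfp] using hprec
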